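/- arXiv:2003.01464 — 7 statements merged into one kernel-verified Lean document; each statement's English description precedes it below -/
import Mathlib

section
/- Let p ∈ [1/2, 1], q ∈ [0, 1] and λ ∈ [0, 1]. For every qubit state ρ (2×2 complex positive semidefinite matrix of trace 1), the causally separable combination λ·N_PF(N_GAD(ρ)) + (1−λ)·N_GAD(N_PF(ρ)) equals the fixed thermal state τ_p = diag(p, 1−p). In particular, no causally separable combination of N_GAD and N_PF can change the output away from τ_p, so the free energy of any input state with respect to the bath τ_p is mapped to its minimum value. -/
open Matrix ComplexOrder

noncomputable def EGAD (p : ℝ) : Fin 4 → Matrix (Fin 2) (Fin 2) ℂ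
  | 0 => (Real.sqrt p : ℂ) • !![1, 0; 0, 0]
  | 1 => (Real.sqrt p : ℂ) • !![0, 1; 0, 0]
  | 2 => (Real.sqrt (1 - p) : ℂ) • !![0, 0; 0, 1]
  | 3 => (Real.sqrt (1 - p) : ℂ) • !![0, 0; 1, 0]

noncomputable def FPF (q : ℝ) : Fin 2 → Matrix (Fin 2) (Fin 2) ℂ
  | 0 => (Real.sqrt q : ℂ) • (1 : Matrix (Fin 2) (Fin 2) ℂ)
  | 1 => (Real.sqrt (1 - q) : ℂ) • !![1, 0; 0, -1]

/-- The generalized amplitude damping channel with unit annihilation parameter. -/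
noncomputable def NGAD (p : ℝ) (ρ : Matrix (Fin 2) (Fin 2) ℂ) : Matrix (Fin 2) (Fin 2) ℂ :=
  ∑ i : Fin 4, EGAD p i * ρ * (EGAD p i)ᴴ

/-- The phase-flip channel. -/
noncomputable def NPF (q : ℝ) (ρ : Matrix (Fin 2) (Fin 2) ℂ) : Matrix (Fin 2) (Fin 2) ℂ :=
  ∑ j : Fin 2, FPF q j * ρ * (FPF q j)ᴴ

/-- The thermal (pin) state τ_p = diag(p, 1-p). -/
noncomputable def tau (p : ℝ) : Matrix (Fin 2) (Fin 2) ℂ := !![(p : ℂ), 0; 0, 1 - (p : ℂ)]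

lemma sq_sqrtC {x : ℝ} (hx : 0 ≤ x) :
    ((Real.sqrt x : ℝ) : ℂ) * ((Real.sqrt x : ℝ) : ℂ) = (x : ℂ) := by
  norm_cast; exact Real.mul_self_sqrt hx

lemma sq_sqrtC' {x : ℝ} (hx : x ≤ 1) :
    ((Real.sqrt (1 - x) : ℝ) : ℂ) * ((Real.sqrt (1 - x) : ℝ) : ℂ) = 1 - (x : ℂ) := by
  rw [sq_sqrtC (by linarith : (0:ℝ) ≤ 1 - x)]; push_cast; ring

lemma ngad_eq (p : ℝ) (hp0 : 0 ≤ p) (hp1 : p ≤ 1) (ρ : Matrix (Fin 2) (Fin 2) ℂ)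
    (htr : ρ 0 0 + ρ 1 1 = 1) : NGAD p ρ = tau p := by
  have hsp := sq_sqrtC hp0
  have hsp1 := sq_sqrtC' hp1
  ext i j
  fin_cases i <;> fin_cases j <;>
    simp [NGAD, EGAD, tau, Fin.sum_univ_four, Matrix.mul_apply, Fin.sum_univ_two,
      Matrix.vecMul, dotProduct, Matrix.conjTranspose_apply, Complex.star_def,
      Complex.conj_ofReal]
  · linear_combination (ρ 0 0 + ρ 1 1) * hsp + (p:ℂ) * htr
  · linear_combination (ρ 0 0 + ρ 1 1) * hsp1 + (1 - (p:ℂ)) * htr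

lemma npf_diag (q : ℝ) (hq0 : 0 ≤ q) (hq1 : q ≤ 1) (ρ : Matrix (Fin 2) (Fin 2) ℂ) :
    (NPF q ρ) 0 0 = ρ 0 0 ∧ (NPF q ρ) 1 1 = ρ 1 1 := by
  have hsq := sq_sqrtC hq0
  have hsq1 := sq_sqrtC' hq1
  constructor <;>
    simp [NPF, FPF, Fin.sum_univ_two, Matrix.mul_apply, Matrix.vecMul, dotProduct,
      Matrix.conjTranspose_apply, Complex.star_def, Complex.conj_ofReal, Matrix.one_apply] <;>
  [ linear_combination ρ 0 0 * hsq + ρ 0 0 * hsq1;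
    linear_combination ρ 1 1 * hsq + ρ 1 1 * hsq1 ]

lemma npf_tau (p q : ℝ) (hq0 : 0 ≤ q) (hq1 : q ≤ 1) : NPF q (tau p) = tau p := by
  have hsq := sq_sqrtC hq0
  have hsq1 := sq_sqrtC' hq1
  ext i j
  fin_cases i <;> fin_cases j <;>
    simp [NPF, FPF, tau, Fin.sum_univ_two, Matrix.mul_apply, Matrix.vecMul,
      dotProduct, Matrix.conjTranspose_apply, Complex.star_def,
      Complex.conj_ofReal, Matrix.one_apply] <;>
  [ linear_combination (p:ℂ) * hsq + (p:ℂ) * hsq1;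
    linear_combination (1 - (p:ℂ)) * hsq + (1 - (p:ℂ)) * hsq1 ]

/-- any causally separable combination of N_PF and N_GAD maps every
qubit state to the fixed thermal state τ_p. -/
theorem causally_separable_combination_is_pin_map
    (p q l : ℝ) (hp : p ∈ Set.Icc (1/2 : ℝ) 1) (hq : q ∈ Set.Icc (0:ℝ) 1)
    (hl : l ∈ Set.Icc (0:ℝ) 1)
    (ρ : Matrix (Fin 2) (Fin 2) ℂ) (hρ : ρ.PosSemidef) (hρtr : ρ.trace = 1) :
    (l : ℂ) • NPF q (NGAD p ρ) + ((1 - l : ℝ) : ℂ) • NGAD p (NPF q ρ) = tau p := by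
  obtain ⟨hp0, hp1⟩ := hp
  obtain ⟨hq0, hq1⟩ := hq
  have hp0' : (0:ℝ) ≤ p := by linarith
  have htr : ρ 0 0 + ρ 1 1 = 1 := by
    rw [Matrix.trace_fin_two] at hρtr; exact hρtr
  have h1 : NGAD p ρ = tau p := ngad_eq p hp0' hp1 ρ htr
  obtain ⟨hd0, hd1⟩ := npf_diag q hq0 hq1 ρ
  have h2 : NGAD p (NPF q ρ) = tau p := by
    apply ngad_eq p hp0' hp1
    rw [hd0, hd1]; exact htr
  rw [h1, h2, npf_tau p q hq0 hq1, ← add_smul]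
  push_cast
  simp
end

section
/- Let p, q ∈ [0,1], let ρ be any qubit state and σ any 2×2 density matrix (the controller state). Then the partial trace over the controller of the controlled combination's output satisfies Tr_c[ Σ_{i,j} K_{ij} (ρ ⊗ σ) K_{ij}† ] = σ₀₀ · N_GAD(N_PF(ρ)) + σ₁₁ · N_PF(N_GAD(ρ)), where σ₀₀, σ₁₁ are the diagonal entries of σ. In particular, the system marginal is a causally separable (convex) combination of the two orders of the channels. -/
open Matrix Kronecker ComplexOrder

/-- Kraus operators of the controlled (causally inseparable) combination with
controller in the computational basis:
`K i j = (E_i F_j) ⊗ |0⟩⟨0| + (F_j E_i) ⊗ |1⟩⟨1|`. -/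
noncomputable def K (p q : ℝ) (i : Fin 4) (j : Fin 2) :
    Matrix (Fin 2 × Fin 2) (Fin 2 × Fin 2) ℂ :=
  (EGAD p i * FPF q j) ⊗ₖ !![1, 0; 0, 0] + (FPF q j * EGAD p i) ⊗ₖ !![0, 0; 0, 1]

/-- Partial trace over the controller (second) qubit. -/
noncomputable def ptraceCtrl (M : Matrix (Fin 2 × Fin 2) (Fin 2 × Fin 2) ℂ) :
    Matrix (Fin 2) (Fin 2) ℂ :=
  fun i j => ∑ k : Fin 2, M (i, k) (j, k)


lemma kron_conjT (A B : Matrix (Fin 2) (Fin 2) ℂ) : (A ⊗ₖ B)ᴴ = Aᴴ ⊗ₖ Bᴴ := by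
  ext ⟨i, k⟩ ⟨j, l⟩
  simp [Matrix.conjTranspose_apply, Matrix.kroneckerMap_apply, mul_comm]

lemma ptr_add (M N : Matrix (Fin 2 × Fin 2) (Fin 2 × Fin 2) ℂ) :
    ptraceCtrl (M + N) = ptraceCtrl M + ptraceCtrl N := by
  ext i j; simp [ptraceCtrl, Finset.sum_add_distrib]

lemma ptr_sum {ι : Type*} (s : Finset ι) (f : ι → Matrix (Fin 2 × Fin 2) (Fin 2 × Fin 2) ℂ) :
    ptraceCtrl (∑ i ∈ s, f i) = ∑ i ∈ s, ptraceCtrl (f i) := by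
  ext i j
  simp [ptraceCtrl, Matrix.sum_apply]
  rw [← Finset.sum_add_distrib]

lemma ptr_kron (M N : Matrix (Fin 2) (Fin 2) ℂ) :
    ptraceCtrl (M ⊗ₖ N) = (N 0 0 + N 1 1) • M := by
  ext i j
  simp [ptraceCtrl, Matrix.kroneckerMap_apply, Fin.sum_univ_two, Matrix.smul_apply]
  ring

lemma kron_mul (A B C D : Matrix (Fin 2) (Fin 2) ℂ) :
    (A ⊗ₖ B) * (C ⊗ₖ D) = (A * C) ⊗ₖ (B * D) :=
  (Matrix.mul_kronecker_mul A C B D).symm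

lemma key_lemma (A B ρ σ : Matrix (Fin 2) (Fin 2) ℂ) :
    ptraceCtrl ((A ⊗ₖ !![1, 0; 0, 0] + B ⊗ₖ !![0, 0; 0, 1]) * (ρ ⊗ₖ σ)
        * (A ⊗ₖ !![1, 0; 0, 0] + B ⊗ₖ !![0, 0; 0, 1])ᴴ)
      = σ 0 0 • (A * ρ * Aᴴ) + σ 1 1 • (B * ρ * Bᴴ) := by
  rw [Matrix.conjTranspose_add, kron_conjT, kron_conjT]
  simp only [add_mul, mul_add, kron_mul, ptr_add, ptr_kron]
  have e00 : (!![(1:ℂ), 0; 0, 0]) ᴴ = !![1, 0; 0, 0] := by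
    ext i j; fin_cases i <;> fin_cases j <;> simp
  have e11 : (!![(0:ℂ), 0; 0, 1]) ᴴ = !![0, 0; 0, 1] := by
    ext i j; fin_cases i <;> fin_cases j <;> simp
  rw [e00, e11]
  simp [Matrix.vecMul, dotProduct, Fin.sum_univ_two, Matrix.mul_apply]

/-- the system marginal of the controlled combination's output is the
causally separable convex combination of the two definite orders, weighted by the
diagonal entries of the controller state. -/
theorem controlled_combination_system_marginal
    (p q : ℝ) (hp : p ∈ Set.Icc (0:ℝ) 1) (hq : q ∈ Set.Icc (0:ℝ) 1)
    (ρ : Matrix (Fin 2) (Fin 2) ℂ) (hρ : ρ.PosSemidef) (hρtr : ρ.trace = 1)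
    (σ : Matrix (Fin 2) (Fin 2) ℂ) (hσ : σ.PosSemidef) (hσtr : σ.trace = 1) :
    ptraceCtrl (∑ i : Fin 4, ∑ j : Fin 2, K p q i j * (ρ ⊗ₖ σ) * (K p q i j)ᴴ)
      = σ 0 0 • NGAD p (NPF q ρ) + σ 1 1 • NPF q (NGAD p ρ) := by
  rw [ptr_sum]
  simp only [ptr_sum, K, key_lemma]
  simp only [Finset.sum_add_distrib, ← Finset.smul_sum]
  have h1 : ∑ i : Fin 4, ∑ j : Fin 2,
      (EGAD p i * FPF q j) * ρ * (EGAD p i * FPF q j)ᴴ = NGAD p (NPF q ρ) := by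
    simp only [NGAD, NPF, Finset.mul_sum, Finset.sum_mul, Matrix.conjTranspose_mul,
      Matrix.mul_assoc]
  have h2 : ∑ i : Fin 4, ∑ j : Fin 2,
      (FPF q j * EGAD p i) * ρ * (FPF q j * EGAD p i)ᴴ = NPF q (NGAD p ρ) := by
    rw [Finset.sum_comm]
    simp only [NPF, NGAD, Finset.mul_sum, Finset.sum_mul, Matrix.conjTranspose_mul,
      Matrix.mul_assoc]
  rw [h1, h2]
end

section
/- Equation (5) of the paper: let p ∈ (1/2, 1), set q = p, let r ∈ [0,1], ρ = diag(r, 1−r), and let the controller be |+⟩⟨+| with |+⟩ = (|0⟩+|1⟩)/√2. Define λ = (1−p)(p + r − 2pr), p_− = p(1−p)(1−r)/λ, p_+ = p(p + r − pr)/(1−λ). Then Σ_{i,j} K_{ij} (ρ ⊗ |+⟩⟨+|) K_{ij}† = λ·diag(p_−, 1−p_−) ⊗ |−⟩⟨−| + (1−λ)·diag(p_+, 1−p_+) ⊗ |+⟩⟨+|, where |−⟩ = (|0⟩−|1⟩)/√2. -/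
set_option maxHeartbeats 2000000
open Matrix Kronecker ComplexOrder

/-- The projector |+⟩⟨+| onto (|0⟩+|1⟩)/√2. -/
noncomputable def plusProj : Matrix (Fin 2) (Fin 2) ℂ := !![1/2, 1/2; 1/2, 1/2]

/-- The projector |−⟩⟨−| onto (|0⟩−|1⟩)/√2. -/
noncomputable def minusProj : Matrix (Fin 2) (Fin 2) ℂ := !![1/2, -(1/2); -(1/2), 1/2]

/-- Equation (5) of the paper.  With q = p, input diag(r, 1-r) and
controller |+⟩⟨+|, the output of the causally inseparable combination is
λ·diag(p₋,1−p₋) ⊗ |−⟩⟨−| + (1−λ)·diag(p₊,1−p₊) ⊗ |+⟩⟨+|. -/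
theorem eq5_output (p r : ℝ) (hp : p ∈ Set.Ioo (1/2 : ℝ) 1) (hr : r ∈ Set.Icc (0:ℝ) 1) :
    ∑ i : Fin 4, ∑ j : Fin 2,
        K p p i j * ((!![(r : ℂ), 0; 0, 1 - (r : ℂ)]) ⊗ₖ plusProj) * (K p p i j)ᴴ
      = (((1 - p) * (p + r - 2*p*r) : ℝ) : ℂ) •
          ((tau (p * (1 - p) * (1 - r) / ((1 - p) * (p + r - 2*p*r)))) ⊗ₖ minusProj)
        + ((1 - (1 - p) * (p + r - 2*p*r) : ℝ) : ℂ) •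
          ((tau (p * (p + r - p*r) / (1 - (1 - p) * (p + r - 2*p*r)))) ⊗ₖ plusProj) := by

  obtain ⟨hp1, hp2⟩ := hp
  obtain ⟨hr1, hr2⟩ := hr
  have hp0 : (0:ℝ) ≤ p := by linarith
  have hp0' : (0:ℝ) ≤ 1 - p := by linarith
  have hs2 : ((Real.sqrt p : ℝ) : ℂ)^2 = (p : ℂ) := by
    rw [← Complex.ofReal_pow, Real.sq_sqrt hp0]
  have ht2 : ((Real.sqrt (1-p) : ℝ) : ℂ)^2 = 1 - (p : ℂ) := by
    rw [← Complex.ofReal_pow, Real.sq_sqrt hp0']; push_cast; ring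
  have hs4 : ((Real.sqrt p : ℝ) : ℂ)^4 = (p : ℂ)^2 := by
    rw [show (4:ℕ) = 2*2 from rfl, pow_mul, hs2]
  have ht4 : ((Real.sqrt (1-p) : ℝ) : ℂ)^4 = (1 - (p : ℂ))^2 := by
    rw [show (4:ℕ) = 2*2 from rfl, pow_mul, ht2]
  have hA : 0 < p + r - 2*p*r := by nlinarith [mul_nonneg (by linarith : (0:ℝ) ≤ 1 - r) (by linarith : (0:ℝ) ≤ 2*p - 1)]
  have hB : p + r - 2*p*r ≤ 1 := by nlinarith [mul_nonneg hr1 (by linarith : (0:ℝ) ≤ 2*p - 1)]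
  have hlam : 0 < (1 - p) * (p + r - 2*p*r) := mul_pos (by linarith) hA
  have hlam2 : (1 - p) * (p + r - 2*p*r) < 1 := by nlinarith
  have hlamC : ((1:ℂ) - p) * ((p:ℂ) + r - 2*p*r) ≠ 0 := by
    have : (((1 - p) * (p + r - 2*p*r) : ℝ) : ℂ) ≠ 0 := by
      exact_mod_cast hlam.ne'
    push_cast at this; intro h; exact this (by linear_combination h)
  have hlam2C : (1:ℂ) - (1 - (p:ℂ)) * ((p:ℂ) + r - 2*p*r) ≠ 0 := by
    have h0 : (0:ℝ) < 1 - (1 - p) * (p + r - 2*p*r) := by linarith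
    have : (((1 - (1 - p) * (p + r - 2*p*r)) : ℝ) : ℂ) ≠ 0 := by exact_mod_cast h0.ne'
    push_cast at this; intro h; exact this (by linear_combination h)
  have hAC : (p:ℂ) + r - r*2*p ≠ 0 := by
    have : ((p + r - 2*p*r : ℝ) : ℂ) ≠ 0 := by exact_mod_cast hA.ne'
    push_cast at this; intro h; exact this (by linear_combination h)
  have hLC : (1:ℂ) - (1 - p) * ((p:ℂ) + r - r*2*p) ≠ 0 := by
    intro h; exact hlam2C (by linear_combination h)
  have h1pC : (1:ℂ) - p ≠ 0 := by
    have : ((1 - p : ℝ) : ℂ) ≠ 0 := by exact_mod_cast (by linarith : (0:ℝ) < 1 - p).ne'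
    push_cast at this; exact this
  ext ⟨i, a⟩ ⟨j, b⟩
  fin_cases i <;> fin_cases a <;> fin_cases j <;> fin_cases b <;>
  · simp [K, EGAD, FPF, plusProj, minusProj, tau, Matrix.sum_apply, Matrix.mul_apply,
      Matrix.kroneckerMap_apply, Fintype.sum_prod_type, Fin.sum_univ_two, Fin.sum_univ_four,
      Matrix.one_apply, Fin.mk_zero, Fin.mk_one, star_mul', Complex.star_def,
      Complex.conj_ofReal, Fin.ext_iff]
    try field_simp [hAC, hLC, h1pC]
    try ring_nf
    try simp only [hs2, ht2, hs4, ht4]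
    try ring
end

section
/- Activation of extractable work (fixed bath): let p ∈ (1/2, 1) and r ∈ [0,1] with r ≠ 1/2, and set λ = (1−p)(p + r − 2pr), p_− = p(1−p)(1−r)/λ, p_+ = p(p + r − pr)/(1−λ). Then the average free energy of the conditional outputs of the causally inseparable combination strictly exceeds the free energy of the definite-order output τ_p: λ·f_p(p_−) + (1−λ)·f_p(p_+) > f_p(p). Hence the average extractable work W_avg = λ·(f_p(p_−) − f_p(p)) + (1−λ)·(f_p(p_+) − f_p(p)) is strictly positive. -/
/-- Natural-log binary entropy H(x) = −x ln x − (1−x) ln(1−x), with H(0) = H(1) = 0. -/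
noncomputable def binEnt (x : ℝ) : ℝ := Real.negMulLog x + Real.negMulLog (1 - x)

/-- Free energy of the diagonal qubit state diag(x, 1−x) (Hamiltonian H = |1⟩⟨1|) with
respect to the bath τ_t = diag(t, 1−t): f_t(x) = (1−x) − H(x)/ln(t/(1−t)). -/
noncomputable def freeEnergy (t x : ℝ) : ℝ := (1 - x) - binEnt x / Real.log (t / (1 - t))

/-- Strict Jensen for binEnt from strict concavity of negMulLog. -/
lemma binEnt_strict_jensen {x y a b : ℝ} (hx : x ∈ Set.Icc (0:ℝ) 1)
    (hy : y ∈ Set.Icc (0:ℝ) 1) (hxy : x ≠ y) (ha : 0 < a) (hb : 0 < b)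
    (hab : a + b = 1) : a * binEnt x + b * binEnt y < binEnt (a*x + b*y) := by
  have h := Real.strictConcaveOn_negMulLog
  have h1 : a * Real.negMulLog x + b * Real.negMulLog y
      < Real.negMulLog (a*x + b*y) := by
    have := h.2 (Set.mem_Ici.2 hx.1) (Set.mem_Ici.2 hy.1) hxy ha hb hab
    simpa [smul_eq_mul] using this
  have h2 : a * Real.negMulLog (1-x) + b * Real.negMulLog (1-y)
      < Real.negMulLog (1 - (a*x + b*y)) := by
    have := h.2 (Set.mem_Ici.2 (by linarith [hx.2] : (0:ℝ) ≤ 1 - x))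
      (Set.mem_Ici.2 (by linarith [hy.2] : (0:ℝ) ≤ 1 - y))
      (by intro hc; apply hxy; linarith) ha hb hab
    have e : a • (1-x) + b • (1-y) = 1 - (a*x + b*y) := by
      simp [smul_eq_mul]; linarith [hab]
    rw [e] at this
    simpa [smul_eq_mul] using this
  simp only [binEnt]
  linarith

/-- activation of extractable work with a fixed bath: for r ≠ 1/2 the
average free energy of the conditional Eq. (5) outputs strictly exceeds f_p(p), so the
average extractable work is strictly positive. -/
theorem work_activation_fixed_bath (p r : ℝ) (hp : p ∈ Set.Ioo (1/2 : ℝ) 1)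
    (hr : r ∈ Set.Icc (0:ℝ) 1) (hr' : r ≠ 1/2) :
    (1 - p) * (p + r - 2*p*r) *
        freeEnergy p (p * (1 - p) * (1 - r) / ((1 - p) * (p + r - 2*p*r)))
      + (1 - (1 - p) * (p + r - 2*p*r)) *
        freeEnergy p (p * (p + r - p*r) / (1 - (1 - p) * (p + r - 2*p*r)))
      > freeEnergy p p ∧
    (1 - p) * (p + r - 2*p*r) *
        (freeEnergy p (p * (1 - p) * (1 - r) / ((1 - p) * (p + r - 2*p*r)))
          - freeEnergy p p)
      + (1 - (1 - p) * (p + r - 2*p*r)) *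
        (freeEnergy p (p * (p + r - p*r) / (1 - (1 - p) * (p + r - 2*p*r)))
          - freeEnergy p p)
      > 0 := by
  obtain ⟨hp1, hp2⟩ := hp
  obtain ⟨hr0, hr1⟩ := hr
  have hd : 0 < p + r - 2*p*r := by
    nlinarith [mul_nonneg (sub_nonneg.2 hr1) (show (0:ℝ) ≤ 2*p - 1 by linarith)]
  set A : ℝ := (1 - p) * (p + r - 2*p*r) with hAdef
  have hA : 0 < A := mul_pos (by linarith) hd
  have hA1 : A < 1 := by
    nlinarith [mul_nonneg (show (0:ℝ) ≤ 1 - p by linarith) (mul_nonneg hr0 (show (0:ℝ) ≤ 2*p - 1 by linarith))]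
  set x : ℝ := p * (1 - p) * (1 - r) / ((1 - p) * (p + r - 2*p*r)) with hxdef
  set y : ℝ := p * (p + r - p*r) / (1 - (1 - p) * (p + r - 2*p*r)) with hydef
  have hA1' : (0:ℝ) < 1 - A := by linarith
  have hx : x ∈ Set.Icc (0:ℝ) 1 := by
    constructor
    · exact div_nonneg (mul_nonneg (mul_nonneg (by linarith) (by linarith)) (by linarith)) hA.le
    · rw [div_le_one hA]
      nlinarith [mul_nonneg hr0 (mul_nonneg (show (0:ℝ) ≤ 1-p by linarith) (show (0:ℝ) ≤ 1-p by linarith))]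
  have hy : y ∈ Set.Icc (0:ℝ) 1 := by
    constructor
    · apply div_nonneg _ hA1'.le
      nlinarith [mul_nonneg hr0 (show (0:ℝ) ≤ 1-p by linarith)]
    · rw [div_le_one hA1']
      nlinarith [mul_nonneg (show (0:ℝ) ≤ 1-p by linarith)
        (show (0:ℝ) ≤ 1 - r + r*p by nlinarith)]
  have hmix : A * x + (1 - A) * y = p := by
    rw [hxdef, hydef, hAdef]
    have e1 : (1 - p) * (p + r - 2*p*r) ≠ 0 := hA.ne'
    have e2 : 1 - (1 - p) * (p + r - 2*p*r) ≠ 0 := hA1'.ne'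
    have e3 : (1 - p) ≠ 0 := by linarith
    have e4 : p + r - 2*p*r ≠ 0 := hd.ne'
    rw [mul_div_cancel₀ _ e1, mul_div_cancel₀ _ e2]
    ring
  have hxp : x ≠ p := by
    rw [hxdef]
    intro h
    rw [div_eq_iff (by positivity : ((1:ℝ)-p) * (p + r - 2*p*r) ≠ 0)] at h
    apply hr'
    have h2 : (p * (1-p)) * ((1 - r) - (p + r - 2*p*r)) = 0 := by nlinarith
    have h3 : (1 - r) - (p + r - 2*p*r) = 0 := by
      rcases mul_eq_zero.1 h2 with h4 | h4
      · exfalso; nlinarith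
      · exact h4
    have h5 : (1 - p) * (1 - 2*r) = 0 := by nlinarith
    rcases mul_eq_zero.1 h5 with h6 | h6
    · exfalso; linarith
    · linarith
  have hxy : x ≠ y := by
    intro h
    apply hxp
    rw [h] at hmix ⊢
    have : ((1:ℝ)) * y = p := by linarith [hmix]
    linarith [this]
  have key : A * binEnt x + (1 - A) * binEnt y < binEnt p := by
    have := binEnt_strict_jensen hx hy hxy hA hA1' (by ring)
    rwa [hmix] at this
  have hL : 0 < Real.log (p / (1 - p)) := by
    apply Real.log_pos
    rw [lt_div_iff₀ (by linarith)]
    linarith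
  have hfe : A * freeEnergy p x + (1 - A) * freeEnergy p y - freeEnergy p p
      = (binEnt p - (A * binEnt x + (1 - A) * binEnt y)) / Real.log (p / (1-p))
        + (p - (A * x + (1 - A) * y)) := by
    simp only [freeEnergy]
    field_simp
    ring
  rw [hmix] at hfe
  have hpos : 0 < (binEnt p - (A * binEnt x + (1 - A) * binEnt y)) / Real.log (p / (1-p)) :=
    div_pos (by linarith) hL
  have h1 : A * freeEnergy p x + (1 - A) * freeEnergy p y > freeEnergy p p := by
    linarith
  refine ⟨h1, ?_⟩
  have e2 : A * (freeEnergy p x - freeEnergy p p)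
      + (1 - A) * (freeEnergy p y - freeEnergy p p)
      = A * freeEnergy p x + (1 - A) * freeEnergy p y - freeEnergy p p := by ring
  rw [e2]
  linarith
end

section
/- Activation of extractable work (varying bath at the input temperature): let p ∈ (1/2, 1) and r ∈ (1/2, 1), and set λ = (1−p)(p + r − 2pr), p_− = p(1−p)(1−r)/λ, p_+ = p(p + r − pr)/(1−λ). Measuring free energy with respect to the bath τ_r = diag(r, 1−r) at the input state's temperature, the causally inseparable combination strictly outperforms any definite-order combination: λ·f_r(p_−) + (1−λ)·f_r(p_+) > f_r(p) ≥ f_r(r). -/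
lemma binEnt_eq (x : ℝ) : binEnt x = Real.binEntropy x :=
  (Real.binEntropy_eq_negMulLog_add_negMulLog_one_sub x).symm

/-- Two-point Gibbs inequality. -/
lemma gibbs {a b : ℝ} (ha0 : 0 < a) (ha1 : a < 1) (hb0 : 0 < b) (hb1 : b < 1) :
    binEnt a ≤ -(a * Real.log b) - (1 - a) * Real.log (1 - b) := by
  have h1 : Real.log (b / a) ≤ b / a - 1 :=
    Real.log_le_sub_one_of_pos (div_pos hb0 ha0)
  have h2 : Real.log ((1 - b) / (1 - a)) ≤ (1 - b) / (1 - a) - 1 :=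
    Real.log_le_sub_one_of_pos (div_pos (by linarith) (by linarith))
  have e1 : Real.log (b / a) = Real.log b - Real.log a :=
    Real.log_div (ne_of_gt hb0) (ne_of_gt ha0)
  have e2 : Real.log ((1 - b) / (1 - a)) = Real.log (1 - b) - Real.log (1 - a) :=
    Real.log_div (by linarith) (by linarith)
  have h1' : a * Real.log (b / a) ≤ b - a := by
    have h := mul_le_mul_of_nonneg_left h1 ha0.le
    have e : a * (b / a - 1) = b - a := by field_simp
    linarith
  have h2' : (1 - a) * Real.log ((1 - b) / (1 - a)) ≤ a - b := by
    have h := mul_le_mul_of_nonneg_left h2 (by linarith : (0:ℝ) ≤ 1 - a)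
    have h1a : (1:ℝ) - a ≠ 0 := by linarith
    have e : (1 - a) * ((1 - b) / (1 - a) - 1) = a - b := by
      field_simp; ring
    linarith
  rw [e1] at h1'
  rw [e2] at h2'
  simp only [binEnt, Real.negMulLog]
  nlinarith

/-- activation of extractable work with the bath at the input state's
temperature: the causally inseparable combination strictly outperforms any
definite-order combination. -/
theorem work_activation_varying_bath (p r : ℝ) (hp : p ∈ Set.Ioo (1/2 : ℝ) 1)
    (hr : r ∈ Set.Ioo (1/2 : ℝ) 1) :
    (1 - p) * (p + r - 2*p*r) *
        freeEnergy r (p * (1 - p) * (1 - r) / ((1 - p) * (p + r - 2*p*r)))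
      + (1 - (1 - p) * (p + r - 2*p*r)) *
        freeEnergy r (p * (p + r - p*r) / (1 - (1 - p) * (p + r - 2*p*r)))
      > freeEnergy r p ∧
    freeEnergy r p ≥ freeEnergy r r := by
  obtain ⟨hp0, hp1⟩ := hp
  obtain ⟨hr0, hr1⟩ := hr
  have hp0' : (0:ℝ) < p := by linarith
  have hr0' : (0:ℝ) < r := by linarith
  have hL : 0 < Real.log (r / (1 - r)) := by
    apply Real.log_pos
    rw [lt_div_iff₀ (by linarith)]
    linarith
  set L := Real.log (r / (1 - r)) with hLdef
  -- abbreviations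
  have h1p : (0:ℝ) < 1 - p := by linarith
  have h1r : (0:ℝ) < 1 - r := by linarith
  have hA : 0 < p + r - 2*p*r := by nlinarith [mul_pos hp0' h1r, mul_pos hr0' h1p]
  have hA1 : p + r - 2*p*r < 1 := by nlinarith [mul_pos h1p h1r, mul_pos hp0' hr0']
  set l := (1 - p) * (p + r - 2*p*r) with hl
  have hl0 : 0 < l := by rw [hl]; exact mul_pos h1p hA
  have hl1 : l < 1 := by rw [hl]; nlinarith [mul_pos hp0' hA]
  set pm := p * (1 - p) * (1 - r) / l with hpm
  set pp := p * (p + r - p*r) / (1 - l) with hpp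
  have hlne : (1 - p) * (p + r - 2*p*r) ≠ 0 := ne_of_gt hl0
  have hlne' : 1 - (1 - p) * (p + r - 2*p*r) ≠ 0 := ne_of_gt (by linarith)
  have hpm0 : 0 < pm := by
    rw [hpm]; exact div_pos (mul_pos (mul_pos hp0' h1p) h1r) hl0
  have hpm1 : pm < 1 := by
    rw [hpm, div_lt_one hl0, hl]
    nlinarith [mul_pos h1p (mul_pos hr0' h1p)]
  have hpp0 : 0 < pp := by
    rw [hpp]; exact div_pos (by nlinarith [mul_pos hr0' h1p]) (by linarith)
  have hpp1 : pp < 1 := by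
    rw [hpp, div_lt_one (by linarith), hl]
    nlinarith [mul_pos h1p h1r, mul_pos (mul_pos hp0' hr0') h1p]
  have hlne0 : l ≠ 0 := ne_of_gt hl0
  have hlne1 : (1:ℝ) - l ≠ 0 := by linarith
  have e1 : l * pm = p * (1 - p) * (1 - r) := by rw [hpm]; field_simp
  have e2 : (1 - l) * pp = p * (p + r - p*r) := by rw [hpp]; field_simp
  have hmix : l * pm + (1 - l) * pp = p := by rw [e1, e2]; ring
  have hpmlt : pm < p := by
    rw [hpm, div_lt_iff₀ hl0, hl]
    nlinarith [mul_pos (mul_pos hp0' (mul_pos h1p h1p)) (show (0:ℝ) < 2*r - 1 by linarith)]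
  have hppgt : p < pp := by
    nlinarith [mul_lt_mul_of_pos_left hpmlt hl0, hmix, hl1]
  -- strict Jensen
  have hsc := Real.strictConcave_binEntropy
  have hjen : l * binEnt pm + (1 - l) * binEnt pp < binEnt p := by
    have := hsc.2 (Set.mem_Icc.2 ⟨hpm0.le, hpm1.le⟩) (Set.mem_Icc.2 ⟨hpp0.le, hpp1.le⟩)
      (ne_of_lt (lt_trans hpmlt hppgt)) hl0 (by linarith : (0:ℝ) < 1 - l)
      (by ring)
    simp only [smul_eq_mul] at this
    rw [hmix] at this
    simpa [binEnt_eq] using this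
  constructor
  · -- first part
    simp only [freeEnergy, ← hLdef]
    have expand : l * (1 - pm - binEnt pm / L) + (1 - l) * (1 - pp - binEnt pp / L)
        = (l * (1 - pm) + (1 - l) * (1 - pp))
          - (l * binEnt pm + (1 - l) * binEnt pp) / L := by
      ring
    have hlin : l * (1 - pm) + (1 - l) * (1 - pp) = 1 - p := by
      linear_combination -hmix
    have hdiv : (l * binEnt pm + (1 - l) * binEnt pp) / L < binEnt p / L := by
      rw [div_lt_div_iff₀ hL hL]
      exact mul_lt_mul_of_pos_right hjen hL
    linarith [expand, hlin, hdiv]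
  · -- second part : f_r(p) ≥ f_r(r)
    simp only [freeEnergy, ← hLdef]
    have hg := gibbs hp0' hp1 hr0' hr1
    have hHr : binEnt r = -(r * Real.log r) - (1 - r) * Real.log (1 - r) := by
      simp [binEnt, Real.negMulLog]; ring
    have hLval : L = Real.log r - Real.log (1 - r) := by
      rw [hLdef, Real.log_div (by positivity) (by linarith)]
    have hkey : binEnt p ≤ binEnt r + (r - p) * L := by
      rw [hHr, hLval]
      exact hg.trans (le_of_eq (by ring))
    have hdiv : binEnt p / L ≤ binEnt r / L + (r - p) := by
      rw [div_le_iff₀ hL]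
      have hLne : L ≠ 0 := hL.ne'
      have e : (binEnt r / L + (r - p)) * L = binEnt r + (r - p) * L := by
        field_simp
      rw [e]
      exact hkey
    linarith [hdiv]
end

section
/- Equation (7) of the paper (thermal controller): let p ∈ (1/2, 1), set q = p, let r ∈ [0,1], and let both the system and the controller be in the state ρ = diag(r, 1−r). Consider the controlled combination with Kraus operators K'_{ij} = (E_i F_j) ⊗ |+⟩⟨+| + (F_j E_i) ⊗ |−⟩⟨−|, where |±⟩ = (|0⟩±|1⟩)/√2. Define μ = (p + 2r(1−p))(1 − r + p(2r−1)), p_0 = p[(1−p)(1+2r²) + (3p−2)r]/μ, p_1 = p(1−r)(p + 2r(1−p))/(1−μ). Then Σ_{i,j} K'_{ij} (ρ ⊗ ρ) K'_{ij}† = μ·diag(p_0, 1−p_0) ⊗ |0⟩⟨0| + (1−μ)·diag(p_1, 1−p_1) ⊗ |1⟩⟨1|. -/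
open Matrix Kronecker ComplexOrder

/-- Kraus operators of the controlled combination with controller in the {|+⟩, |−⟩}
basis: `K' i j = (E_i F_j) ⊗ |+⟩⟨+| + (F_j E_i) ⊗ |−⟩⟨−|`. -/
noncomputable def K' (p q : ℝ) (i : Fin 4) (j : Fin 2) :
    Matrix (Fin 2 × Fin 2) (Fin 2 × Fin 2) ℂ :=
  (EGAD p i * FPF q j) ⊗ₖ plusProj + (FPF q j * EGAD p i) ⊗ₖ minusProj

set_option maxHeartbeats 2000000 in
/-- Equation (7) of the paper.  With q = p and both the system and the
controller in the thermal state diag(r, 1−r), the output of the controlled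
combination in the {|+⟩, |−⟩} controller basis is
μ·diag(p₀,1−p₀) ⊗ |0⟩⟨0| + (1−μ)·diag(p₁,1−p₁) ⊗ |1⟩⟨1|. -/
theorem eq7_output (p r : ℝ) (hp : p ∈ Set.Ioo (1/2 : ℝ) 1) (hr : r ∈ Set.Icc (0:ℝ) 1) :
    ∑ i : Fin 4, ∑ j : Fin 2,
        K' p p i j *
          ((!![(r : ℂ), 0; 0, 1 - (r : ℂ)]) ⊗ₖ (!![(r : ℂ), 0; 0, 1 - (r : ℂ)])) *
          (K' p p i j)ᴴ
      = (((p + 2*r*(1 - p)) * (1 - r + p*(2*r - 1)) : ℝ) : ℂ) •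
          ((tau (p * ((1 - p) * (1 + 2*r^2) + (3*p - 2) * r)
              / ((p + 2*r*(1 - p)) * (1 - r + p*(2*r - 1))))) ⊗ₖ (!![1, 0; 0, 0]))
        + ((1 - (p + 2*r*(1 - p)) * (1 - r + p*(2*r - 1)) : ℝ) : ℂ) •
          ((tau (p * (1 - r) * (p + 2*r*(1 - p))
              / (1 - (p + 2*r*(1 - p)) * (1 - r + p*(2*r - 1))))) ⊗ₖ (!![0, 0; 0, 1])) := by
  obtain ⟨hp1, hp2⟩ := hp
  obtain ⟨hr1, hr2⟩ := hr
  have hp0 : (0:ℝ) ≤ p := by linarith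
  have hp1' : (0:ℝ) ≤ 1 - p := by linarith
  have hq1 : ((Real.sqrt p : ℝ):ℂ) * ((Real.sqrt p : ℝ):ℂ) = (p:ℂ) := by
    exact_mod_cast congrArg Complex.ofReal (Real.mul_self_sqrt hp0)
  have hw1 : ((Real.sqrt (1-p) : ℝ):ℂ) * ((Real.sqrt (1-p) : ℝ):ℂ) = 1 - (p:ℂ) := by
    have := congrArg Complex.ofReal (Real.mul_self_sqrt hp1')
    push_cast at this
    exact_mod_cast this
  have hq2 : ((Real.sqrt p : ℝ):ℂ)^2 = (p:ℂ) := by rw [sq, hq1]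
  have hw2 : ((Real.sqrt (1-p) : ℝ):ℂ)^2 = 1 - (p:ℂ) := by rw [sq, hw1]
  have hb : (0:ℝ) < 1 - r + p*(2*r - 1) := by
    nlinarith [mul_nonneg (show (0:ℝ) ≤ 2*p-1 by linarith) hr1]
  have ha : (0:ℝ) < p + 2*r*(1 - p) := by nlinarith [mul_nonneg hr1 hp1']
  have hmu : ((p + 2*r*(1 - p)) * (1 - r + p*(2*r - 1))) ≠ 0 := by positivity
  have hmu1 : (1 - (p + 2*r*(1 - p)) * (1 - r + p*(2*r - 1))) ≠ 0 := by
    have : (0:ℝ) < 1 - (p + 2*r*(1 - p)) * (1 - r + p*(2*r - 1)) := by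
      nlinarith [sq_nonneg ((1-p)*(2*r-1) + (1-r)/2),
        mul_pos (show (0:ℝ) < 1-p by linarith) (show (0:ℝ) < 1-p by linarith),
        mul_nonneg (show (0:ℝ) ≤ 1-r by linarith) (show (0:ℝ) ≤ 1-r by linarith),
        sq_nonneg ((1-p)*(2*r-1))]
    linarith
  have key : ∀ (m x : ℝ) (A : Matrix (Fin 2) (Fin 2) ℂ), m ≠ 0 →
      ((m:ℝ):ℂ) • (tau (x/m) ⊗ₖ A) = (!![((x:ℝ):ℂ), 0; 0, ((m - x : ℝ):ℂ)]) ⊗ₖ A := by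
    intro m x A hm
    rw [← Matrix.smul_kronecker]
    congr 1
    have hmc : ((m:ℝ):ℂ) ≠ 0 := by exact_mod_cast hm
    ext i j
    fin_cases i <;> fin_cases j <;>
      simp [tau, Matrix.smul_apply, smul_eq_mul] <;> push_cast <;> field_simp <;> ring
  rw [key _ _ _ hmu, key _ _ _ hmu1]
  have h00 : K' p p 0 0 = !![(p:ℂ), 0; 0, 0] ⊗ₖ !![1, 0; 0, 1] := by
    ext ⟨i, k⟩ ⟨j, l⟩
    fin_cases i <;> fin_cases k <;> fin_cases j <;> fin_cases l <;>
      simp [K', EGAD, FPF, plusProj, minusProj] <;> linear_combination hq1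
  have h01 : K' p p 0 1 =
      !![((Real.sqrt p : ℝ):ℂ) * ((Real.sqrt (1-p) : ℝ):ℂ), 0; 0, 0] ⊗ₖ !![1, 0; 0, 1] := by
    ext ⟨i, k⟩ ⟨j, l⟩
    fin_cases i <;> fin_cases k <;> fin_cases j <;> fin_cases l <;>
      simp [K', EGAD, FPF, plusProj, minusProj] <;> ring
  have h10 : K' p p 1 0 = !![0, (p:ℂ); 0, 0] ⊗ₖ !![1, 0; 0, 1] := by
    ext ⟨i, k⟩ ⟨j, l⟩
    fin_cases i <;> fin_cases k <;> fin_cases j <;> fin_cases l <;>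
      simp [K', EGAD, FPF, plusProj, minusProj] <;> linear_combination hq1
  have h11 : K' p p 1 1 =
      !![0, ((Real.sqrt p : ℝ):ℂ) * ((Real.sqrt (1-p) : ℝ):ℂ); 0, 0] ⊗ₖ !![0, -1; -1, 0] := by
    ext ⟨i, k⟩ ⟨j, l⟩
    fin_cases i <;> fin_cases k <;> fin_cases j <;> fin_cases l <;>
      simp [K', EGAD, FPF, plusProj, minusProj] <;> ring
  have h20 : K' p p 2 0 =
      !![0, 0; 0, ((Real.sqrt p : ℝ):ℂ) * ((Real.sqrt (1-p) : ℝ):ℂ)] ⊗ₖ !![1, 0; 0, 1] := by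
    ext ⟨i, k⟩ ⟨j, l⟩
    fin_cases i <;> fin_cases k <;> fin_cases j <;> fin_cases l <;>
      simp [K', EGAD, FPF, plusProj, minusProj] <;> ring
  have h21 : K' p p 2 1 = !![0, 0; 0, -(1 - (p:ℂ))] ⊗ₖ !![1, 0; 0, 1] := by
    ext ⟨i, k⟩ ⟨j, l⟩
    fin_cases i <;> fin_cases k <;> fin_cases j <;> fin_cases l <;>
      simp [K', EGAD, FPF, plusProj, minusProj] <;> linear_combination -hw1
  have h30 : K' p p 3 0 =
      !![0, 0; ((Real.sqrt p : ℝ):ℂ) * ((Real.sqrt (1-p) : ℝ):ℂ), 0] ⊗ₖ !![1, 0; 0, 1] := by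
    ext ⟨i, k⟩ ⟨j, l⟩
    fin_cases i <;> fin_cases k <;> fin_cases j <;> fin_cases l <;>
      simp [K', EGAD, FPF, plusProj, minusProj] <;> ring
  have h31 : K' p p 3 1 = !![0, 0; 1 - (p:ℂ), 0] ⊗ₖ !![0, 1; 1, 0] := by
    ext ⟨i, k⟩ ⟨j, l⟩
    fin_cases i <;> fin_cases k <;> fin_cases j <;> fin_cases l <;>
      simp [K', EGAD, FPF, plusProj, minusProj] <;> linear_combination hw1
  have hct : ∀ (A B : Matrix (Fin 2) (Fin 2) ℂ), (A ⊗ₖ B)ᴴ = Aᴴ ⊗ₖ Bᴴ := by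
    intro A B
    ext ⟨i, k⟩ ⟨j, l⟩
    simp [Matrix.conjTranspose_apply, Matrix.kroneckerMap_apply]
  have hc1 : (!![(p:ℂ), 0; 0, 0])ᴴ = !![(p:ℂ), 0; 0, 0] := by
    ext i j; fin_cases i <;> fin_cases j <;> simp [Matrix.conjTranspose_apply]
  have hc2 : (!![((Real.sqrt p : ℝ):ℂ) * ((Real.sqrt (1-p) : ℝ):ℂ), 0; 0, 0])ᴴ
      = !![((Real.sqrt p : ℝ):ℂ) * ((Real.sqrt (1-p) : ℝ):ℂ), 0; 0, 0] := by
    ext i j; fin_cases i <;> fin_cases j <;> simp [Matrix.conjTranspose_apply]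
  have hc3 : (!![0, (p:ℂ); 0, 0])ᴴ = !![0, 0; (p:ℂ), 0] := by
    ext i j; fin_cases i <;> fin_cases j <;> simp [Matrix.conjTranspose_apply]
  have hc4 : (!![0, ((Real.sqrt p : ℝ):ℂ) * ((Real.sqrt (1-p) : ℝ):ℂ); 0, 0])ᴴ
      = !![0, 0; ((Real.sqrt p : ℝ):ℂ) * ((Real.sqrt (1-p) : ℝ):ℂ), 0] := by
    ext i j; fin_cases i <;> fin_cases j <;> simp [Matrix.conjTranspose_apply]
  have hc5 : (!![0, 0; 0, ((Real.sqrt p : ℝ):ℂ) * ((Real.sqrt (1-p) : ℝ):ℂ)])ᴴ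
      = !![0, 0; 0, ((Real.sqrt p : ℝ):ℂ) * ((Real.sqrt (1-p) : ℝ):ℂ)] := by
    ext i j; fin_cases i <;> fin_cases j <;> simp [Matrix.conjTranspose_apply]
  have hc6 : (!![0, 0; 0, -(1 - (p:ℂ))])ᴴ = !![0, 0; 0, -(1 - (p:ℂ))] := by
    ext i j; fin_cases i <;> fin_cases j <;> simp [Matrix.conjTranspose_apply]
  have hc7 : (!![0, 0; ((Real.sqrt p : ℝ):ℂ) * ((Real.sqrt (1-p) : ℝ):ℂ), 0])ᴴ
      = !![0, ((Real.sqrt p : ℝ):ℂ) * ((Real.sqrt (1-p) : ℝ):ℂ); 0, 0] := by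
    ext i j; fin_cases i <;> fin_cases j <;> simp [Matrix.conjTranspose_apply]
  have hc8 : (!![0, 0; 1 - (p:ℂ), 0])ᴴ = !![0, 1 - (p:ℂ); 0, 0] := by
    ext i j; fin_cases i <;> fin_cases j <;> simp [Matrix.conjTranspose_apply]
  have hc9 : (!![1, 0; 0, 1] : Matrix (Fin 2) (Fin 2) ℂ)ᴴ = !![1, 0; 0, 1] := by
    ext i j; fin_cases i <;> fin_cases j <;> simp [Matrix.conjTranspose_apply]
  have hc10 : (!![0, -1; -1, 0] : Matrix (Fin 2) (Fin 2) ℂ)ᴴ = !![0, -1; -1, 0] := by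
    ext i j; fin_cases i <;> fin_cases j <;> simp [Matrix.conjTranspose_apply]
  have hc11 : (!![0, 1; 1, 0] : Matrix (Fin 2) (Fin 2) ℂ)ᴴ = !![0, 1; 1, 0] := by
    ext i j; fin_cases i <;> fin_cases j <;> simp [Matrix.conjTranspose_apply]
  simp only [Fin.sum_univ_four, Fin.sum_univ_two, h00, h01, h10, h11, h20, h21, h30, h31,
    hct, hc1, hc2, hc3, hc4, hc5, hc6, hc7, hc8, hc9, hc10, hc11,
    ← Matrix.mul_kronecker_mul, Matrix.mul_fin_two]
  ext ⟨i, k⟩ ⟨j, l⟩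
  fin_cases i <;> fin_cases k <;> fin_cases j <;> fin_cases l <;>
    · simp [Matrix.kroneckerMap_apply, Matrix.add_apply]
      try push_cast
      try ring_nf
      try simp only [hq2, hw2, hq1, hw1]
      try ring
end

section
/- Activation of extractable work with a thermodynamically free controller: let p ∈ (1/2, 1) and r ∈ [0,1] with r ≠ 1/2, and set μ = (p + 2r(1−p))(1 − r + p(2r−1)), p_0 = p[(1−p)(1+2r²) + (3p−2)r]/μ, p_1 = p(1−r)(p + 2r(1−p))/(1−μ). Then the average free energy of the conditional outputs strictly exceeds that of the definite-order output τ_p: μ·f_p(p_0) + (1−μ)·f_p(p_1) > f_p(p). Hence a strictly positive amount of work is extractable on average even though the controller is the resource-free thermal state diag(r, 1−r). -/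
/-- Strict Jensen inequality for the free energy (abstract form): if μ ∈ (0,1),
p0, p1 ∈ [0,1] with p0 ≠ p1 and μ p0 + (1−μ) p1 = p for p ∈ (1/2, 1), then the
μ-average of the free energies strictly exceeds f_p(p). -/
lemma freeEnergy_jensen (p μ p0 p1 : ℝ) (hp1 : 1/2 < p) (hp2 : p < 1)
    (hμ : 0 < μ) (hμ1 : μ < 1)
    (h00 : 0 ≤ p0) (h01 : p0 ≤ 1) (h10 : 0 ≤ p1) (h11 : p1 ≤ 1)
    (hne : p0 ≠ p1) (hsum : μ * p0 + (1 - μ) * p1 = p) :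
    μ * freeEnergy p p0 + (1 - μ) * freeEnergy p p1 > freeEnergy p p := by
  have hμ1' : 0 < 1 - μ := by linarith
  have hC := Real.strictConcaveOn_negMulLog
  have key1 : μ * Real.negMulLog p0 + (1 - μ) * Real.negMulLog p1 < Real.negMulLog p := by
    have := hC.2 (Set.mem_Ici.2 h00) (Set.mem_Ici.2 h10) hne hμ hμ1' (by ring)
    simpa [smul_eq_mul, hsum] using this
  have key2 : μ * Real.negMulLog (1 - p0) + (1 - μ) * Real.negMulLog (1 - p1)
      < Real.negMulLog (1 - p) := by
    have hne' : (1 - p0) ≠ (1 - p1) := fun h => hne (by linarith)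
    have := hC.2 (Set.mem_Ici.2 (by linarith : (0:ℝ) ≤ 1 - p0))
      (Set.mem_Ici.2 (by linarith : (0:ℝ) ≤ 1 - p1)) hne' hμ hμ1' (by ring)
    have hsum' : μ * (1 - p0) + (1 - μ) * (1 - p1) = 1 - p := by
      have h : μ * (1 - p0) + (1 - μ) * (1 - p1) = 1 - (μ * p0 + (1 - μ) * p1) := by ring
      rw [h, hsum]
    simpa [smul_eq_mul, hsum'] using this
  have key : μ * binEnt p0 + (1 - μ) * binEnt p1 < binEnt p := by
    unfold binEnt; linarith
  have hL : 0 < Real.log (p / (1 - p)) := by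
    apply Real.log_pos
    rw [lt_div_iff₀ (by linarith)]
    linarith
  have hdivlt : (μ * binEnt p0 + (1 - μ) * binEnt p1) / Real.log (p / (1 - p))
      < binEnt p / Real.log (p / (1 - p)) :=
    (div_lt_div_iff_of_pos_right hL).2 key
  have hsum2 : μ * (1 - p0) + (1 - μ) * (1 - p1) = 1 - p := by
    have h : μ * (1 - p0) + (1 - μ) * (1 - p1) = 1 - (μ * p0 + (1 - μ) * p1) := by ring
    rw [h, hsum]
  unfold freeEnergy
  have e : μ * ((1 - p0) - binEnt p0 / Real.log (p / (1 - p)))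
      + (1 - μ) * ((1 - p1) - binEnt p1 / Real.log (p / (1 - p)))
      = (μ * (1 - p0) + (1 - μ) * (1 - p1))
        - (μ * binEnt p0 + (1 - μ) * binEnt p1) / Real.log (p / (1 - p)) := by
    ring
  rw [gt_iff_lt, ← sub_pos]
  rw [e, hsum2]
  have : binEnt p / Real.log (p / (1 - p))
      - (μ * binEnt p0 + (1 - μ) * binEnt p1) / Real.log (p / (1 - p)) > 0 := by
    linarith
  linarith

/-- activation of extractable work with a thermodynamically free
(thermal-state) controller: for r ≠ 1/2 the average free energy of the conditional
Eq. (7) outputs strictly exceeds f_p(p), so a strictly positive amount of work is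
extractable on average. -/
theorem work_activation_free_controller (p r : ℝ) (hp : p ∈ Set.Ioo (1/2 : ℝ) 1)
    (hr : r ∈ Set.Icc (0:ℝ) 1) (hr' : r ≠ 1/2) :
    (p + 2*r*(1 - p)) * (1 - r + p*(2*r - 1)) *
        freeEnergy p (p * ((1 - p) * (1 + 2*r^2) + (3*p - 2) * r)
          / ((p + 2*r*(1 - p)) * (1 - r + p*(2*r - 1))))
      + (1 - (p + 2*r*(1 - p)) * (1 - r + p*(2*r - 1))) *
        freeEnergy p (p * (1 - r) * (p + 2*r*(1 - p))
          / (1 - (p + 2*r*(1 - p)) * (1 - r + p*(2*r - 1))))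
      > freeEnergy p p := by
  obtain ⟨hp1, hp2⟩ := hp
  obtain ⟨hr1, hr2⟩ := hr
  have hrne : (2*r - 1) ≠ 0 := fun h => hr' (by linarith)
  have hrsq : 0 < (2*r - 1)^2 :=
    lt_of_le_of_ne (sq_nonneg _) (Ne.symm (pow_ne_zero 2 hrne))
  have ha : 0 < p + 2*r*(1 - p) := by nlinarith
  have hb : 0 < 1 - r + p*(2*r - 1) := by nlinarith
  have hμ : 0 < (p + 2*r*(1 - p)) * (1 - r + p*(2*r - 1)) := mul_pos ha hb
  -- numerators
  have hn0 : 0 ≤ p * ((1 - p) * (1 + 2*r^2) + (3*p - 2) * r) := by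
    nlinarith [sq_nonneg (r - 1), sq_nonneg r, mul_nonneg hr1 (sub_nonneg.2 hp2.le)]
  have hn1 : 0 ≤ p * (1 - r) * (p + 2*r*(1 - p)) :=
    mul_nonneg (mul_nonneg (by linarith) (by linarith)) ha.le
  -- bound μ - n0 = r(1-p)((2-p) - 2r(1-p)) ≥ 0
  have hdec0 : (p + 2*r*(1 - p)) * (1 - r + p*(2*r - 1))
      - p * ((1 - p) * (1 + 2*r^2) + (3*p - 2) * r)
      = r*(1 - p)*((2 - p) - 2*r*(1 - p)) := by ring
  have hfac0 : 0 ≤ (2 - p) - 2*r*(1 - p) := by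
    nlinarith [mul_nonneg (sub_nonneg.2 hr2) (by linarith : (0:ℝ) ≤ 1 - p)]
  have hn0le : p * ((1 - p) * (1 + 2*r^2) + (3*p - 2) * r)
      ≤ (p + 2*r*(1 - p)) * (1 - r + p*(2*r - 1)) := by
    have h := mul_nonneg (mul_nonneg hr1 (by linarith : (0:ℝ) ≤ 1 - p)) hfac0
    linarith [hdec0]
  -- bound (1-μ) - n1 = (1-p)Q with Q > 0
  have hQ : 0 < (1 - r)^2 + r^2 + r*p*(1 - 2*r) := by
    rcases le_or_gt r (1/2) with h | h
    · have h2 : 0 ≤ r*p*(1 - 2*r) :=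
        mul_nonneg (mul_nonneg hr1 (by linarith)) (by linarith)
      nlinarith [sq_nonneg (1 - 2*r)]
    · have hpos : 0 < r * (2*r - 1) := mul_pos (by linarith) (by linarith)
      have h3 : p * (r * (2*r - 1)) < r * (2*r - 1) := by nlinarith
      nlinarith
  have hdec1 : (1 - (p + 2*r*(1 - p)) * (1 - r + p*(2*r - 1)))
      - p * (1 - r) * (p + 2*r*(1 - p))
      = (1 - p)*((1 - r)^2 + r^2 + r*p*(1 - 2*r)) := by ring
  have hn1lt : p * (1 - r) * (p + 2*r*(1 - p))
      < 1 - (p + 2*r*(1 - p)) * (1 - r + p*(2*r - 1)) := by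
    have h := mul_pos (by linarith : (0:ℝ) < 1 - p) hQ
    linarith [hdec1]
  have hμ1' : 0 < 1 - (p + 2*r*(1 - p)) * (1 - r + p*(2*r - 1)) :=
    lt_of_le_of_lt hn1 hn1lt
  have hμ1 : (p + 2*r*(1 - p)) * (1 - r + p*(2*r - 1)) < 1 := by linarith
  -- apply the Jensen lemma
  apply freeEnergy_jensen p _ _ _ hp1 hp2 hμ hμ1
  · exact div_nonneg hn0 hμ.le
  · exact (div_le_one hμ).2 hn0le
  · exact div_nonneg hn1 hμ1'.le
  · exact (div_le_one hμ1').2 hn1lt.le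
  · -- p0 ≠ p1
    have hdiff : p * ((1 - p) * (1 + 2*r^2) + (3*p - 2) * r)
          * (1 - (p + 2*r*(1 - p)) * (1 - r + p*(2*r - 1)))
        - p * (1 - r) * (p + 2*r*(1 - p))
          * ((p + 2*r*(1 - p)) * (1 - r + p*(2*r - 1)))
        = p * (1 - p)^2 * (2*r - 1)^2 := by ring
    have hposd : 0 < p * (1 - p)^2 * (2*r - 1)^2 :=
      mul_pos (mul_pos (by linarith) (pow_pos (by linarith) 2)) hrsq
    have hlt : p * (1 - r) * (p + 2*r*(1 - p))
          / (1 - (p + 2*r*(1 - p)) * (1 - r + p*(2*r - 1)))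
        < p * ((1 - p) * (1 + 2*r^2) + (3*p - 2) * r)
          / ((p + 2*r*(1 - p)) * (1 - r + p*(2*r - 1))) := by
      rw [div_lt_div_iff₀ hμ1' hμ]
      linarith
    exact ne_of_gt hlt
  · -- μ p0 + (1-μ) p1 = p
    rw [mul_div_cancel₀ _ (ne_of_gt hμ), mul_div_cancel₀ _ (ne_of_gt hμ1')]
    ring
end
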